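/- Let Z and Z' be 2-tails of a nodal curve C such that Z ∧ Z' is nonempty and Z ∪ Z' ≠ C. Then Z ∧ Z' and Z ∪ Z' are both 2-tails of C. -/

import Mathlib

open Set

/- Dual multigraph model of a nodal curve: vertices `V` are irreducible
components, edges `E` are nodes, with endpoint maps `s t : E → V`. -/

/-- The set of terminal points (edges of the cut) of a vertex subset `Z`. -/
def TermPts {V E : Type} (s t : E → V) (Z : Set V) : Set E :=
  {e | (s e ∈ Z ∧ t e ∉ Z) ∨ (t e ∈ Z ∧ s e ∉ Z)}

/-- A subcurve is a nonempty proper subset of the components. -/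
def Subcurve {V : Type} (Z : Set V) : Prop := Z.Nonempty ∧ Z ≠ Set.univ

/-- Connectivity of the induced sub-multigraph on `Z`. -/
def ConnOn {V E : Type} (s t : E → V) (Z : Set V) : Prop :=
  ∀ x ∈ Z, ∀ y ∈ Z,
    Relation.ReflTransGen
      (fun a b => a ∈ Z ∧ b ∈ Z ∧ ∃ e, (s e = a ∧ t e = b) ∨ (s e = b ∧ t e = a)) x y

/-- A tail is a subcurve with both sides connected. -/
def IsTail {V E : Type} (s t : E → V) (Z : Set V) : Prop :=
  Subcurve Z ∧ ConnOn s t Z ∧ ConnOn s t Zᶜ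

/-- `k_Z`, the number of terminal points of `Z`. -/
noncomputable def kcut {V E : Type} (s t : E → V) (Z : Set V) : ℕ :=
  (TermPts s t Z).ncard

/-- The pair `(Z, Z')` is free if the edge cuts are disjoint. -/
def FreePair {V E : Type} (s t : E → V) (Z Z' : Set V) : Prop :=
  TermPts s t Z ∩ TermPts s t Z' = ∅

/-- The pair `(Z, Z')` is perfect. -/
def PerfectPair {V : Type} (Z Z' : Set V) : Prop :=
  Z ⊆ Z' ∨ Z' ⊆ Z ∨ Zᶜ ⊆ Z' ∨ Z' ⊆ Zᶜ

/-!
Cut `C` into the four quadrants `Z ∩ Z'`, `Z \ Z'`, `Z' \ Z` and `(Z ∪ Z')ᶜ`. If neither tail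
contains the other, all four are nonempty, and connectedness of `Z`, `Z'`, `Zᶜ`, `Z'ᶜ` gives edges
`a : Z ∩ Z' — Z \ Z'`, `b : Z ∩ Z' — Z' \ Z`, `c : Z' \ Z — (Z ∪ Z')ᶜ`, `d : Z \ Z' — (Z ∪ Z')ᶜ`.
Since `k_Z = k_Z' = 2` these are all the terminal points: `Term_Z = {b, d}` and `Term_Z' = {a, c}`.
Hence `Term_{Z ∩ Z'} = {a, b}`; `a` is the only edge joining `Z ∩ Z'` to the rest of `Z`, and `c`
the only one joining `Z' \ Z` to the rest of `Zᶜ`, so both pieces stay connected, and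
`(Z ∩ Z')ᶜ` is `Z'ᶜ` glued to `Z' \ Z` along `c`. The union case is the intersection case for
`Zᶜ, Z'ᶜ`, as complementation preserves 2-tails.
-/

open Relation

variable {V E : Type} {s t : E → V} {A W Y Z Z' : Set V} {e f : E} {u x y : V}

def edgesBetween (s t : E → V) (A B : Set V) : Set E :=
  {e | (s e ∈ A ∧ t e ∈ B) ∨ (t e ∈ A ∧ s e ∈ B)}

def InducedAdj (s t : E → V) (Z : Set V) (a b : V) : Prop :=
  a ∈ Z ∧ b ∈ Z ∧ ∃ e, (s e = a ∧ t e = b) ∨ (s e = b ∧ t e = a)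

def IsTwoTail (s t : E → V) (Z : Set V) : Prop :=
  IsTail s t Z ∧ kcut s t Z = 2

section Cuts

theorem termPts_compl (Z : Set V) : TermPts s t Zᶜ = TermPts s t Z := by
  ext e
  simp only [TermPts, mem_ofPred_eq, mem_compl_iff, not_not]
  tauto

theorem kcut_compl (Z : Set V) : kcut s t Zᶜ = kcut s t Z := by
  rw [kcut, kcut, termPts_compl]

theorem termPts_inter_subset (Z Z' : Set V) :
    TermPts s t (Z ∩ Z') ⊆ TermPts s t Z ∪ TermPts s t Z' := by
  intro e
  simp only [TermPts, mem_ofPred_eq, mem_inter_iff, mem_union]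
  tauto

theorem notMem_termPts_of_mem (hs : s e ∈ Y) (ht : t e ∈ Y) : e ∉ TermPts s t Y := by
  rintro (⟨-, h⟩ | ⟨-, h⟩) <;> contradiction

theorem notMem_termPts_of_mem_compl (hs : s e ∈ Yᶜ) (ht : t e ∈ Yᶜ) : e ∉ TermPts s t Y :=
  termPts_compl (s := s) (t := t) Y ▸ notMem_termPts_of_mem hs ht

theorem termPts_eq_pair (hk : kcut s t Y = 2) (he : e ∈ TermPts s t Y) (hf : f ∈ TermPts s t Y)
    (hef : e ≠ f) : TermPts s t Y = {e, f} :=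
  (eq_of_subset_of_ncard_le (pair_subset he hf) (hk.trans (ncard_pair hef).symm).le
    (finite_of_ncard_ne_zero (by rw [← kcut, hk]; omega))).symm

theorem edgesBetween_mono {A' B B' : Set V} (hA : A ⊆ A') (hB : B ⊆ B') :
    edgesBetween s t A B ⊆ edgesBetween s t A' B' := by
  rintro e (⟨h₁, h₂⟩ | ⟨h₁, h₂⟩)
  exacts [Or.inl ⟨hA h₁, hB h₂⟩, Or.inr ⟨hA h₁, hB h₂⟩]

theorem edgesBetween_inter_sdiff_subset_termPts :
    edgesBetween s t (W ∩ A) (W \ A) ⊆ TermPts s t A :=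
  edgesBetween_mono inter_subset_right (sdiff_subset_compl W A)

theorem mem_of_mem_edgesBetween_inter_sdiff (he : e ∈ edgesBetween s t (W ∩ A) (W \ A)) :
    s e ∈ W ∧ t e ∈ W := by
  rcases he with ⟨h₁, h₂⟩ | ⟨h₁, h₂⟩
  exacts [⟨h₁.1, h₂.1⟩, ⟨h₂.1, h₁.1⟩]

end Cuts

section Connectivity

instance (Z : Set V) : Std.Symm (InducedAdj s t Z) :=
  ⟨fun _ _ ⟨ha, hb, e, he⟩ => ⟨hb, ha, e, he.symm⟩⟩

theorem reflTransGen_inducedAdj_mono (h : A ⊆ W) :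
    ReflTransGen (InducedAdj s t A) x y → ReflTransGen (InducedAdj s t W) x y :=
  ReflTransGen.mono (fun _ _ ⟨ha, hb, he⟩ => ⟨h ha, h hb, he⟩) x y

theorem connOn_of_forall_reflTransGen (h : ∀ x ∈ Z, ReflTransGen (InducedAdj s t Z) x u) :
    ConnOn s t Z :=
  fun x hx y hy => (h x hx).trans (Std.Symm.symm _ _ (h y hy))

theorem ConnOn.union {B : Set V} (hA : ConnOn s t A) (hB : ConnOn s t B)
    (hAB : (edgesBetween s t A B).Nonempty) : ConnOn s t (A ∪ B) := by
  obtain ⟨a, b, ha, hb, hba⟩ : ∃ a b, a ∈ A ∧ b ∈ B ∧ InducedAdj s t (A ∪ B) b a := by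
    obtain ⟨e, ⟨hs, ht⟩ | ⟨ht, hs⟩⟩ := hAB
    · exact ⟨s e, t e, hs, ht, Or.inr ht, Or.inl hs, e, Or.inr ⟨rfl, rfl⟩⟩
    · exact ⟨t e, s e, ht, hs, Or.inr hs, Or.inl ht, e, Or.inl ⟨rfl, rfl⟩⟩
  refine connOn_of_forall_reflTransGen (u := a) ?_
  rintro x (hx | hx)
  · exact reflTransGen_inducedAdj_mono subset_union_left (hA x hx a ha)
  · exact (reflTransGen_inducedAdj_mono subset_union_right (hB x hx b hb)).tail hba

theorem ConnOn.nonempty_edgesBetween (hW : ConnOn s t W) (hx : x ∈ W ∩ A) (hy : y ∈ W \ A) :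
    (edgesBetween s t (W ∩ A) (W \ A)).Nonempty := by
  have key : ∀ z, ReflTransGen (InducedAdj s t W) x z → z ∉ A →
      (edgesBetween s t (W ∩ A) (W \ A)).Nonempty := by
    intro z hz
    induction hz with
    | refl => exact absurd hx.2
    | @tail b c _ hbc ih =>
      intro hc
      by_cases hb : b ∈ A
      · obtain ⟨hbW, hcW, e, ⟨rfl, rfl⟩ | ⟨rfl, rfl⟩⟩ := hbc
        exacts [⟨e, Or.inl ⟨⟨hbW, hb⟩, hcW, hc⟩⟩, ⟨e, Or.inr ⟨⟨hbW, hb⟩, hcW, hc⟩⟩]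
      · exact ih hb
  exact key y (hW x hx.1 y hy.1) hy.2

theorem eq_of_mem_edgesBetween {P Q : Set V} {b : V} (hPQ : Disjoint P Q)
    (he : e ∈ edgesBetween s t P Q) (hb : b ∈ P) (hu : u ∈ P)
    (hbe : s e = b ∨ t e = b) (hue : s e = u ∨ t e = u) : b = u := by
  have := hPQ.notMem_of_mem_left
  rcases he with ⟨h₁, h₂⟩ | ⟨h₁, h₂⟩ <;> grind

/-- A path in `W` starting in `W ∩ A` stays in `W ∩ A` until it first crosses the bridge `e`, which
it can only do from the endpoint `u` of `e` in `A`; so every point of `W ∩ A` reaches `u` inside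
`W ∩ A`. -/
theorem ConnOn.inter_of_edgesBetween_inter_sdiff_eq_singleton (hW : ConnOn s t W)
    (he : edgesBetween s t (W ∩ A) (W \ A) = {e}) : ConnOn s t (W ∩ A) := by
  have he' : e ∈ edgesBetween s t (W ∩ A) (W \ A) := he ▸ rfl
  obtain ⟨u, hu, hue⟩ : ∃ u ∈ W ∩ A, s e = u ∨ t e = u := by
    rcases he' with ⟨h, -⟩ | ⟨h, -⟩
    exacts [⟨_, h, Or.inl rfl⟩, ⟨_, h, Or.inr rfl⟩]
  have hattach : ∀ b c, InducedAdj s t W b c → b ∈ A → c ∉ A → b = u := by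
    rintro b c ⟨hbW, hcW, e', he'c⟩ hb hc
    have : e' ∈ edgesBetween s t (W ∩ A) (W \ A) := by
      rcases he'c with ⟨rfl, rfl⟩ | ⟨rfl, rfl⟩
      exacts [Or.inl ⟨⟨hbW, hb⟩, hcW, hc⟩, Or.inr ⟨⟨hbW, hb⟩, hcW, hc⟩]
    rw [he, mem_singleton_iff] at this
    subst this
    exact eq_of_mem_edgesBetween disjoint_sdiff_inter.symm he' ⟨hbW, hb⟩ hu
      (he'c.imp And.left And.right) hue
  refine connOn_of_forall_reflTransGen (u := u) fun x hx => ?_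
  have reach : ∀ z, ReflTransGen (InducedAdj s t W) x z →
      ReflTransGen (InducedAdj s t (W ∩ A)) x u ∨
        z ∈ A ∧ ReflTransGen (InducedAdj s t (W ∩ A)) x z := by
    intro z hz
    induction hz with
    | refl => exact Or.inr ⟨hx.2, .refl⟩
    | @tail b c _ hbc ih =>
      rcases ih with h | ⟨hb, h⟩
      · exact Or.inl h
      by_cases hc : c ∈ A
      · exact Or.inr ⟨hc, h.tail ⟨⟨hbc.1, hb⟩, ⟨hbc.2.1, hc⟩, hbc.2.2⟩⟩
      · exact Or.inl (hattach b c hbc hb hc ▸ h)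
  exact (reach u (hW x hx.1 u hu.1)).elim id And.right

end Connectivity

section TwoTails

theorem IsTail.compl (h : IsTail s t Z) : IsTail s t Zᶜ :=
  ⟨⟨nonempty_compl.2 h.1.2, compl_ne_univ.2 h.1.1⟩, h.2.2, (compl_compl Z).symm ▸ h.2.1⟩

theorem IsTwoTail.compl (h : IsTwoTail s t Z) : IsTwoTail s t Zᶜ :=
  ⟨h.1.compl, (kcut_compl Z).trans h.2⟩

theorem edgesBetween_inter_sdiff_eq_singleton (hcut : TermPts s t A = {e, f})
    (he : e ∈ edgesBetween s t (W ∩ A) (W \ A)) (hf : s f ∉ W) :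
    edgesBetween s t (W ∩ A) (W \ A) = {e} := by
  refine subset_antisymm (fun g hg => ?_) (singleton_subset_iff.2 he)
  have hg' := edgesBetween_inter_sdiff_subset_termPts hg
  rw [hcut] at hg'
  rcases hg' with rfl | rfl
  · rfl
  · exact absurd (mem_of_mem_edgesBetween_inter_sdiff hg).1 hf

theorem kcut_inter_eq_two {a b c d : E} (hcutZ : TermPts s t Z = {b, d})
    (hcutZ' : TermPts s t Z' = {a, c}) (ha : a ∈ edgesBetween s t (Z ∩ Z') (Z \ Z'))
    (hb : b ∈ edgesBetween s t (Z' ∩ Z) (Z' \ Z)) (hc : c ∈ edgesBetween s t (Zᶜ ∩ Z') (Zᶜ \ Z'))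
    (hd : d ∈ edgesBetween s t (Z'ᶜ ∩ Z) (Z'ᶜ \ Z)) : kcut s t (Z ∩ Z') = 2 := by
  obtain ⟨has, hat⟩ := mem_of_mem_edgesBetween_inter_sdiff ha
  obtain ⟨hcs, hct⟩ := mem_of_mem_edgesBetween_inter_sdiff hc
  obtain ⟨hds, hdt⟩ := mem_of_mem_edgesBetween_inter_sdiff hd
  have hcut : TermPts s t (Z ∩ Z') = {a, b} := by
    refine subset_antisymm (fun g hg => ?_) (pair_subset ?_ ?_)
    · have := termPts_inter_subset Z Z' hg
      rw [hcutZ, hcutZ'] at this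
      rcases this with (rfl | rfl) | (rfl | rfl)
      · exact Or.inr rfl
      · exact absurd hg (notMem_termPts_of_mem_compl (fun h => hds h.2) (fun h => hdt h.2))
      · exact Or.inl rfl
      · exact absurd hg (notMem_termPts_of_mem_compl (fun h => hcs h.1) (fun h => hct h.1))
    · exact edgesBetween_mono subset_rfl
        ((sdiff_subset_compl Z Z').trans (compl_subset_compl.2 inter_subset_right)) ha
    · exact edgesBetween_mono (inter_comm Z' Z).subset
        ((sdiff_subset_compl Z' Z).trans (compl_subset_compl.2 inter_subset_left)) hb
  have hab : a ≠ b := by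
    rintro rfl
    exact notMem_termPts_of_mem has hat (edgesBetween_inter_sdiff_subset_termPts hb)
  rw [kcut, hcut, ncard_pair hab]

theorem IsTwoTail.inter_of_not_subset (hZ : IsTwoTail s t Z) (hZ' : IsTwoTail s t Z')
    (hne : (Z ∩ Z').Nonempty) (hun : Z ∪ Z' ≠ univ) (hZZ' : ¬Z ⊆ Z') (hZ'Z : ¬Z' ⊆ Z) :
    IsTwoTail s t (Z ∩ Z') := by
  obtain ⟨⟨⟨-, hZu⟩, hZc, hZcc⟩, hkZ⟩ := hZ
  obtain ⟨⟨-, hZ'c, hZ'cc⟩, hkZ'⟩ := hZ'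
  obtain ⟨p, hp⟩ := hne
  obtain ⟨q, hqZ, hqZ'⟩ := not_subset.1 hZZ'
  obtain ⟨q', hq'Z', hq'Z⟩ := not_subset.1 hZ'Z
  obtain ⟨r, hr⟩ := nonempty_compl.2 hun
  rw [compl_union] at hr
  obtain ⟨a, ha⟩ := hZc.nonempty_edgesBetween hp ⟨hqZ, hqZ'⟩
  obtain ⟨b, hb⟩ := hZ'c.nonempty_edgesBetween ⟨hp.2, hp.1⟩ ⟨hq'Z', hq'Z⟩
  obtain ⟨c, hc⟩ := hZcc.nonempty_edgesBetween ⟨hq'Z, hq'Z'⟩ ⟨hr.1, hr.2⟩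
  obtain ⟨d, hd⟩ := hZ'cc.nonempty_edgesBetween ⟨hqZ', hqZ⟩ ⟨hr.2, hr.1⟩
  have has := (mem_of_mem_edgesBetween_inter_sdiff ha).1
  have hbs := (mem_of_mem_edgesBetween_inter_sdiff hb).1
  have hcs := (mem_of_mem_edgesBetween_inter_sdiff hc).1
  have hds := (mem_of_mem_edgesBetween_inter_sdiff hd).1
  have hcutZ : TermPts s t Z = {b, d} :=
    termPts_eq_pair hkZ (edgesBetween_inter_sdiff_subset_termPts hb)
      (edgesBetween_inter_sdiff_subset_termPts hd)
      (fun h => hds (h ▸ hbs))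
  have hcutZ' : TermPts s t Z' = {a, c} :=
    termPts_eq_pair hkZ' (edgesBetween_inter_sdiff_subset_termPts ha)
      (edgesBetween_inter_sdiff_subset_termPts hc) (fun h => hcs (h ▸ has))
  have hconn : ConnOn s t (Z ∩ Z') := hZc.inter_of_edgesBetween_inter_sdiff_eq_singleton
    (edgesBetween_inter_sdiff_eq_singleton hcutZ' ha hcs)
  have hconnDiff : ConnOn s t (Zᶜ ∩ Z') := hZcc.inter_of_edgesBetween_inter_sdiff_eq_singleton
    (edgesBetween_inter_sdiff_eq_singleton (pair_comm a c ▸ hcutZ') hc (fun h => h has))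
  have hconnc : ConnOn s t (Zᶜ ∩ Z' ∪ Z'ᶜ) :=
    hconnDiff.union hZ'cc ⟨c, edgesBetween_mono subset_rfl (sdiff_subset_compl _ _) hc⟩
  rw [show Zᶜ ∩ Z' ∪ Z'ᶜ = (Z ∩ Z')ᶜ by ext x; by_cases x ∈ Z' <;> simp [*]] at hconnc
  exact ⟨⟨⟨⟨p, hp⟩, fun h => hZu (univ_subset_iff.1 (h ▸ inter_subset_left))⟩, hconn, hconnc⟩,
    kcut_inter_eq_two hcutZ hcutZ' ha hb hc hd⟩

theorem IsTwoTail.inter (hZ : IsTwoTail s t Z) (hZ' : IsTwoTail s t Z')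
    (hne : (Z ∩ Z').Nonempty) (hun : Z ∪ Z' ≠ univ) : IsTwoTail s t (Z ∩ Z') := by
  by_cases hZZ' : Z ⊆ Z'
  · rwa [inter_eq_left.2 hZZ']
  by_cases hZ'Z : Z' ⊆ Z
  · rwa [inter_eq_right.2 hZ'Z]
  exact hZ.inter_of_not_subset hZ' hne hun hZZ' hZ'Z

theorem IsTwoTail.union (hZ : IsTwoTail s t Z) (hZ' : IsTwoTail s t Z')
    (hne : (Z ∩ Z').Nonempty) (hun : Z ∪ Z' ≠ univ) : IsTwoTail s t (Z ∪ Z') := by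
  have := (hZ.compl.inter hZ'.compl (by rwa [← compl_union, nonempty_compl])
    (by rwa [← compl_inter, compl_ne_univ])).compl
  rwa [compl_inter, compl_compl, compl_compl] at this

end TwoTails

theorem stmt_9_general {V E : Type} (s t : E → V)
    (Z Z' : Set V)
    (hZ : IsTail s t Z) (hZ' : IsTail s t Z')
    (hkZ : kcut s t Z = 2) (hkZ' : kcut s t Z' = 2)
    (hne : (Z ∩ Z').Nonempty) (hun : Z ∪ Z' ≠ Set.univ) :
    (IsTail s t (Z ∩ Z') ∧ kcut s t (Z ∩ Z') = 2) ∧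
    (IsTail s t (Z ∪ Z') ∧ kcut s t (Z ∪ Z') = 2) :=
  ⟨IsTwoTail.inter ⟨hZ, hkZ⟩ ⟨hZ', hkZ'⟩ hne hun, IsTwoTail.union ⟨hZ, hkZ⟩ ⟨hZ', hkZ'⟩ hne hun⟩

/-- Proposition 4.1: if `Z, Z'` are 2-tails with `Z ∧ Z'` nonempty and
`Z ∪ Z' ≠ C`, then `Z ∧ Z'` and `Z ∪ Z'` are 2-tails. -/
theorem stmt_9 {V E : Type} [Fintype V] [Fintype E] (s t : E → V)
    (hC : ConnOn s t Set.univ) (Z Z' : Set V)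
    (hZ : IsTail s t Z) (hZ' : IsTail s t Z')
    (hkZ : kcut s t Z = 2) (hkZ' : kcut s t Z' = 2)
    (hne : (Z ∩ Z').Nonempty) (hun : Z ∪ Z' ≠ Set.univ) :
    (IsTail s t (Z ∩ Z') ∧ kcut s t (Z ∩ Z') = 2) ∧
    (IsTail s t (Z ∪ Z') ∧ kcut s t (Z ∪ Z') = 2) :=
  stmt_9_general s t Z Z' hZ hZ' hkZ hkZ' hne hun
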